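/- arXiv:2402.19266 — 5 statements merged into one kernel-verified Lean document; each statement's English description precedes it below -/
import Mathlib

section
/- In a relational doctrine, if f : A → X and g : B → Y are R-injective arrows (i.e., their graphs gr(f), gr(g) satisfy gr(f);gr(f)° ≤ d_A and gr(g);gr(g)° ≤ d_B, together with the totality which holds for all graphs), then the composite R[f,g] ∘ E[f,g] is the identity on R(A,B), where R[f,g](α) = gr(f) ; α ; gr(g)° is reindexing and E[f,g](β) = gr(f)° ; β ; gr(g) is its left adjoint. -/
open CategoryTheory

structure RelDoctrineCat (C : Type*) [Category C] where
  Rel : C → C → Type*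
  [po : ∀ X Y : C, PartialOrder (Rel X Y)]
  d : ∀ X : C, Rel X X
  comp : ∀ {X Y Z : C}, Rel X Y → Rel Y Z → Rel X Z
  conv : ∀ {X Y : C}, Rel X Y → Rel Y X
  comp_mono : ∀ {X Y Z : C} {a a' : Rel X Y} {b b' : Rel Y Z}, a ≤ a' → b ≤ b' → comp a b ≤ comp a' b'
  conv_mono : ∀ {X Y : C} {a a' : Rel X Y}, a ≤ a' → conv a ≤ conv a'
  comp_assoc : ∀ {X Y Z W : C} (a : Rel X Y) (b : Rel Y Z) (c : Rel Z W),
    comp (comp a b) c = comp a (comp b c)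
  d_comp : ∀ {X Y : C} (a : Rel X Y), comp (d X) a = a
  comp_d : ∀ {X Y : C} (a : Rel X Y), comp a (d Y) = a
  conv_comp : ∀ {X Y Z : C} (a : Rel X Y) (b : Rel Y Z), conv (comp a b) = comp (conv b) (conv a)
  conv_d : ∀ X : C, conv (d X) = d X
  conv_conv : ∀ {X Y : C} (a : Rel X Y), conv (conv a) = a
  gr : ∀ {X Y : C}, (X ⟶ Y) → Rel X Y
  gr_functional : ∀ {X Y : C} (f : X ⟶ Y), comp (conv (gr f)) (gr f) ≤ d Y
  gr_total : ∀ {X Y : C} (f : X ⟶ Y), d X ≤ comp (gr f) (conv (gr f))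
  gr_comp : ∀ {X Y Z : C} (f : X ⟶ Y) (g : Y ⟶ Z), gr (f ≫ g) = comp (gr f) (gr g)
  gr_id : ∀ X : C, gr (𝟙 X) = d X

attribute [instance] RelDoctrineCat.po

/-- If f and g are R-injective, then reindexing after its left adjoint is the identity:
    gr f ; (gr f° ; β ; gr g) ; gr g° = β. -/
theorem reidx_exists_id_of_injective {C : Type*} [Category C] (R : RelDoctrineCat C)
    {A X B Y : C} (f : A ⟶ X) (g : B ⟶ Y)
    (hf : R.comp (R.gr f) (R.conv (R.gr f)) ≤ R.d A)
    (hg : R.comp (R.gr g) (R.conv (R.gr g)) ≤ R.d B) :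
    ∀ β : R.Rel A B,
      R.comp (R.gr f) (R.comp (R.comp (R.conv (R.gr f)) (R.comp β (R.gr g))) (R.conv (R.gr g))) = β := by
  intro β
  have key : R.comp (R.gr f) (R.comp (R.comp (R.conv (R.gr f)) (R.comp β (R.gr g))) (R.conv (R.gr g)))
      = R.comp (R.comp (R.gr f) (R.conv (R.gr f))) (R.comp β (R.comp (R.gr g) (R.conv (R.gr g)))) := by
    simp only [R.comp_assoc]
  rw [key]
  apply le_antisymm
  · calc R.comp (R.comp (R.gr f) (R.conv (R.gr f))) (R.comp β (R.comp (R.gr g) (R.conv (R.gr g))))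
        ≤ R.comp (R.d A) (R.comp β (R.d B)) := R.comp_mono hf (R.comp_mono le_rfl hg)
      _ = β := by rw [R.comp_d, R.d_comp]
  · calc β = R.comp (R.d A) (R.comp β (R.d B)) := by rw [R.comp_d, R.d_comp]
      _ ≤ _ := R.comp_mono (R.gr_total f) (R.comp_mono le_rfl (R.gr_total g))
end

section
/- In a relational doctrine, if f : A → X and g : B → Y are R-surjective arrows (their graphs satisfy d_X ≤ gr(f)°;gr(f) and d_Y ≤ gr(g)°;gr(g)), then E[f,g] ∘ R[f,g] is the identity on R(X,Y), where R[f,g](α) = gr(f);α;gr(g)° and E[f,g](β) = gr(f)°;β;gr(g). -/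
open CategoryTheory

/-- If f and g are R-surjective, then the left adjoint after reindexing is the identity:
    gr f° ; (gr f ; α ; gr g°) ; gr g = α. -/
theorem exists_reidx_id_of_surjective {C : Type*} [Category C] (R : RelDoctrineCat C)
    {A X B Y : C} (f : A ⟶ X) (g : B ⟶ Y)
    (hf : R.d X ≤ R.comp (R.conv (R.gr f)) (R.gr f))
    (hg : R.d Y ≤ R.comp (R.conv (R.gr g)) (R.gr g)) :
    ∀ α : R.Rel X Y,
      R.comp (R.conv (R.gr f)) (R.comp (R.comp (R.gr f) (R.comp α (R.conv (R.gr g)))) (R.gr g)) = α := by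
  intro α
  have hfe : R.comp (R.conv (R.gr f)) (R.gr f) = R.d X :=
    le_antisymm (R.gr_functional f) hf
  have hge : R.comp (R.conv (R.gr g)) (R.gr g) = R.d Y :=
    le_antisymm (R.gr_functional g) hg
  calc R.comp (R.conv (R.gr f)) (R.comp (R.comp (R.gr f) (R.comp α (R.conv (R.gr g)))) (R.gr g))
      = R.comp (R.comp (R.conv (R.gr f)) (R.gr f))
          (R.comp α (R.comp (R.conv (R.gr g)) (R.gr g))) := by
        simp only [R.comp_assoc]
    _ = α := by rw [hfe, hge, R.d_comp, R.comp_d]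
end

section
/- In a relational doctrine, if X and Y are extensional objects, X satisfies the rule of unique choice (is Cauchy-complete), and f : X → Y is R-bijective, then f is an isomorphism in the base category. -/
open CategoryTheory

/-- If X and Y are extensional, X is Cauchy-complete and f : X ⟶ Y is R-bijective,
    then f is an isomorphism. -/
theorem bijective_isIso {C : Type*} [Category C] (R : RelDoctrineCat C)
    {X Y : C}
    (hXext : ∀ (Z : C) (f g : Z ⟶ X), R.gr f = R.gr g → f = g)
    (hYext : ∀ (Z : C) (f g : Z ⟶ Y), R.gr f = R.gr g → f = g)
    (hXcc : ∀ (Z : C) (α : R.Rel Z X),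
        R.comp (R.conv α) α ≤ R.d X → R.d Z ≤ R.comp α (R.conv α) →
        ∃ f : Z ⟶ X, R.gr f = α)
    (f : X ⟶ Y)
    (h1 : R.comp (R.gr f) (R.conv (R.gr f)) = R.d X)
    (h2 : R.comp (R.conv (R.gr f)) (R.gr f) = R.d Y) :
    IsIso f := by
  obtain ⟨g, hg⟩ := hXcc Y (R.conv (R.gr f))
    (by rw [R.conv_conv, h1])
    (by rw [R.conv_conv, h2])
  refine ⟨g, ?_, ?_⟩
  · apply hXext
    rw [R.gr_comp, hg, h1, R.gr_id]
  · apply hYext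
    rw [R.gr_comp, hg, R.gr_id, h2]
end

section
/- In the relational doctrine of metric bimodules, every dense isometry f : A → B between metric spaces is a bijective relation: gr(f) ; gr(f)° = δ_A and gr(f)° ; gr(f) = δ_B, where gr(f)(a,b) = δ_B(f(a),b), (α;β)(x,z) = inf_y (α(x,y)+β(y,z)), and f is dense means inf_{a∈A} δ_B(f(a),b) = 0 for all b ∈ B, and isometry means δ_B(f(a),f(a')) = δ_A(a,a'). -/
open scoped ENNReal

/-- A (pseudo)metric space with distance valued in `[0,∞]`. -/
structure PMet where
  carrier : Type*
  δ : carrier → carrier → ℝ≥0∞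
  refl : ∀ x, δ x x = 0
  symm : ∀ x y, δ x y = δ y x
  triangle : ∀ x y z, δ x z ≤ δ x y + δ y z

/-- Bimodule (relation) condition between metric spaces. -/
def IsBimod (X Y : PMet) (α : X.carrier → Y.carrier → ℝ≥0∞) : Prop :=
  (∀ x' x y, α x' y ≤ X.δ x' x + α x y) ∧ (∀ x y y', α x y' ≤ α x y + Y.δ y y')

/-- Composition of bimodules. -/
noncomputable def bcomp {X Y Z : PMet} (α : X.carrier → Y.carrier → ℝ≥0∞)
    (β : Y.carrier → Z.carrier → ℝ≥0∞) : X.carrier → Z.carrier → ℝ≥0∞ :=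
  fun x z => ⨅ y, α x y + β y z

/-- Converse of a bimodule. -/
def bconv {X Y : PMet} (α : X.carrier → Y.carrier → ℝ≥0∞) : Y.carrier → X.carrier → ℝ≥0∞ :=
  fun y x => α x y

/-- The graph of a map between metric spaces. -/
def mgr {X Y : PMet} (f : X.carrier → Y.carrier) : X.carrier → Y.carrier → ℝ≥0∞ :=
  fun x y => Y.δ (f x) y

/-- Every dense isometry is a bijective relation in the doctrine of metric
    bimodules: gr f ; gr f° = δ_A and gr f° ; gr f = δ_B. -/
theorem denseIsometry_bijective {A B : PMet} (f : A.carrier → B.carrier)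
    (hiso : ∀ a a', B.δ (f a) (f a') = A.δ a a')
    (hdense : ∀ b, (⨅ a, B.δ (f a) b) = 0) :
    bcomp (X := A) (Y := B) (Z := A) (mgr f) (bconv (mgr f)) = A.δ ∧
    bcomp (X := B) (Y := A) (Z := B) (bconv (mgr f)) (mgr f) = B.δ := by
  constructor
  · funext a a'
    apply le_antisymm
    · calc (⨅ b, mgr f a b + bconv (mgr f) b a')
          ≤ mgr f a (f a') + bconv (mgr f) (f a') a' := iInf_le _ _
        _ = A.δ a a' := by
            simp [mgr, bconv, hiso, A.refl]
    · refine le_iInf fun b => ?_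
      calc A.δ a a' = B.δ (f a) (f a') := (hiso a a').symm
        _ ≤ B.δ (f a) b + B.δ b (f a') := B.triangle _ _ _
        _ = mgr f a b + bconv (mgr f) b a' := by
            simp [mgr, bconv, B.symm b (f a')]
  · funext b b'
    apply le_antisymm
    · refine ENNReal.le_of_forall_pos_le_add fun ε hε _ => ?_
      have h2 : (0 : ℝ≥0∞) < (ε : ℝ≥0∞) / 2 :=
        ENNReal.div_pos (by exact_mod_cast hε.ne') (by norm_num)
      obtain ⟨a, ha⟩ : ∃ a, B.δ (f a) b < (ε : ℝ≥0∞) / 2 := by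
        have := hdense b
        by_contra h
        push_neg at h
        have : ((ε : ℝ≥0∞) / 2) ≤ ⨅ a, B.δ (f a) b := le_iInf h
        rw [hdense b] at this
        exact absurd this (by simpa using h2.ne')
      calc (⨅ a, bconv (mgr f) b a + mgr f a b')
          ≤ bconv (mgr f) b a + mgr f a b' := iInf_le _ _
        _ = B.δ (f a) b + B.δ (f a) b' := by simp [mgr, bconv]
        _ ≤ B.δ (f a) b + (B.δ (f a) b + B.δ b b') := by
            gcongr
            exact B.triangle _ _ _
        _ ≤ (ε : ℝ≥0∞) / 2 + ((ε : ℝ≥0∞) / 2 + B.δ b b') := by gcongr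
        _ = B.δ b b' + ε := by rw [← add_assoc, ENNReal.add_halves]; ring
    · refine le_iInf fun a => ?_
      calc B.δ b b' ≤ B.δ b (f a) + B.δ (f a) b' := B.triangle _ _ _
        _ = bconv (mgr f) b a + mgr f a b' := by
            simp [mgr, bconv, B.symm b (f a)]
end

section
/- Given a relational doctrine R on C and a monad m = (T, η, μ) on R, the a,b-closed relations between T-algebras form a relational doctrine: if (X,a), (Y,b), (Z,c) are algebras for the base monad and α ∈ R(X,Y), β ∈ R(Y,Z) are closed (gr(a)° ; T̂(α) ; gr(b) ≤ α and gr(b)° ; T̂(β) ; gr(c) ≤ β), then α;β is a,c-closed, d_X is a,a-closed, and α° is b,a-closed. -/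
open CategoryTheory

/-- A lifting of a monad on the base category to the relations of a relational
    doctrine, together with the lax compatibility conditions. -/
structure DMonadLift {C : Type*} [Category C] (R : RelDoctrineCat C) (m : Monad C) where
  lift : ∀ {X Y : C}, R.Rel X Y → R.Rel (m.obj X) (m.obj Y)
  lift_mono : ∀ {X Y : C} {a b : R.Rel X Y}, a ≤ b → lift a ≤ lift b
  lift_d : ∀ X : C, lift (R.d X) = R.d (m.obj X)
  lift_comp : ∀ {X Y Z : C} (a : R.Rel X Y) (b : R.Rel Y Z),
    lift (R.comp a b) = R.comp (lift a) (lift b)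
  lift_conv : ∀ {X Y : C} (a : R.Rel X Y), lift (R.conv a) = R.conv (lift a)
  lift_gr : ∀ {X Y : C} (f : X ⟶ Y), lift (R.gr f) = R.gr (m.map f)
  lax_unit : ∀ {X Y : C} (a : R.Rel X Y),
    a ≤ R.comp (R.gr (m.η.app X)) (R.comp (lift a) (R.conv (R.gr (m.η.app Y))))
  lax_mul : ∀ {X Y : C} (a : R.Rel X Y),
    lift (lift a) ≤ R.comp (R.gr (m.μ.app X)) (R.comp (lift a) (R.conv (R.gr (m.μ.app Y))))

/-- `α` is an `a,b`-closed relation between the algebras `A` and `B`. -/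
def IsClosedRel {C : Type*} [Category C] {R : RelDoctrineCat C} {m : Monad C}
    (L : DMonadLift R m) (A B : m.Algebra) (α : R.Rel A.A B.A) : Prop :=
  R.comp (R.conv (R.gr A.a)) (R.comp (L.lift α) (R.gr B.a)) ≤ α

/-- Closed relations between algebras are stable under composition, contain the
    diagonals, and are stable under converse: they form a relational doctrine. -/
theorem closedRel_relDoctrine {C : Type*} [Category C] (R : RelDoctrineCat C)
    (m : Monad C) (L : DMonadLift R m) (A B D : m.Algebra)
    (α : R.Rel A.A B.A) (β : R.Rel B.A D.A)
    (hα : IsClosedRel L A B α) (hβ : IsClosedRel L B D β) :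
    IsClosedRel L A D (R.comp α β) ∧
    IsClosedRel L A A (R.d A.A) ∧
    IsClosedRel L B A (R.conv α) := by

  have hα' : R.comp (R.conv (R.gr A.a)) (R.comp (L.lift α) (R.gr B.a)) ≤ α := hα
  have hβ' : R.comp (R.conv (R.gr B.a)) (R.comp (L.lift β) (R.gr D.a)) ≤ β := hβ
  refine ⟨?_, ?_, ?_⟩
  · show R.comp (R.conv (R.gr A.a)) (R.comp (L.lift (R.comp α β)) (R.gr D.a)) ≤ R.comp α β
    rw [L.lift_comp]
    have hins : R.comp (L.lift α) (L.lift β) ≤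
        R.comp (L.lift α) (R.comp (R.comp (R.gr B.a) (R.conv (R.gr B.a))) (L.lift β)) := by
      calc R.comp (L.lift α) (L.lift β)
          = R.comp (L.lift α) (R.comp (R.d _) (L.lift β)) := by rw [R.d_comp]
        _ ≤ _ := R.comp_mono le_rfl (R.comp_mono (R.gr_total _) le_rfl)
    calc R.comp (R.conv (R.gr A.a)) (R.comp (R.comp (L.lift α) (L.lift β)) (R.gr D.a))
        ≤ R.comp (R.conv (R.gr A.a))
            (R.comp (R.comp (L.lift α)
              (R.comp (R.comp (R.gr B.a) (R.conv (R.gr B.a))) (L.lift β))) (R.gr D.a)) :=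
          R.comp_mono le_rfl (R.comp_mono hins le_rfl)
      _ = R.comp (R.comp (R.conv (R.gr A.a)) (R.comp (L.lift α) (R.gr B.a)))
            (R.comp (R.conv (R.gr B.a)) (R.comp (L.lift β) (R.gr D.a))) := by
          simp only [R.comp_assoc]
      _ ≤ R.comp α β := R.comp_mono hα' hβ'
  · show R.comp (R.conv (R.gr A.a)) (R.comp (L.lift (R.d A.A)) (R.gr A.a)) ≤ R.d A.A
    rw [L.lift_d, R.d_comp]
    exact R.gr_functional A.a
  · show R.comp (R.conv (R.gr B.a)) (R.comp (L.lift (R.conv α)) (R.gr A.a)) ≤ R.conv α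
    rw [L.lift_conv]
    calc R.comp (R.conv (R.gr B.a)) (R.comp (R.conv (L.lift α)) (R.gr A.a))
        = R.conv (R.comp (R.conv (R.gr A.a)) (R.comp (L.lift α) (R.gr B.a))) := by
          simp only [R.conv_comp, R.conv_conv, R.comp_assoc]
      _ ≤ R.conv α := R.conv_mono hα'
end
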